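/- arXiv:cs/0606057 — 4 statements merged into one kernel-verified Lean document; each statement's English description precedes it below -/
import Mathlib

section
/- Let R ⊆ {0,1}^n be closed under the ternary majority function m(x,y,z) = (x∧y)∨(y∧z)∨(x∧z) (applied coordinatewise), and suppose every pair of tuples in R has Hamming distance at most 2. If R contains three distinct tuples t₁, t₂, t₃ with t₂ = t₁ ⊕ A and t₃ = t₁ ⊕ B where |A| = |B| = 2 and |A ∪ B| = 3, then setting t = m(t₁,t₂,t₃), every tuple t' ∈ R satisfies d_H(t, t') ≤ 1. -/
/-!
Measure every tuple from `t₁`: a tuple is `t₁ ⊕ E` for its difference set `E`, distances become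
`d(t₁ ⊕ X, t₁ ⊕ Y) = |X ∆ Y|` and `m(t₁, t₁ ⊕ X, t₁ ⊕ Y) = t₁ ⊕ (X ∩ Y)`. So `t = t₁ ⊕ {c}` with
`A ∩ B = {c}`, and for `t' = t₁ ⊕ E ∈ R` closure puts `t₁ ⊕ (A ∩ E)` in `R`. The bounds
`|A ∆ E| ≤ 2` and `|(A ∩ E) ∆ B| ≤ 2` give `|E| ≤ 2|A ∩ E|` and `|A ∩ E| ≤ 2|{c} ∩ E|`, so either
`E = ∅` or `c ∈ E`; with `|E| ≤ 2` both give `|{c} ∆ E| ≤ 1`.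
-/

def flipSet {n : ℕ} (A : Finset (Fin n)) (t : Fin n → Bool) : Fin n → Bool :=
  fun i => if i ∈ A then !t i else t i


def maj {n : ℕ} (x y z : Fin n → Bool) : Fin n → Bool :=
  fun i => (x i && y i) || (y i && z i) || (x i && z i)


open Finset symmDiff

theorem Finset.card_symmDiff_add_two_mul_card_inter {α : Type*} [DecidableEq α] (s t : Finset α) :
    #(s ∆ t) + 2 * #(s ∩ t) = #s + #t := by
  rw [symmDiff_def, sup_eq_union, card_union_of_disjoint disjoint_sdiff_sdiff]
  have hs := card_sdiff_add_card_inter s t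
  have ht := card_sdiff_add_card_inter t s
  rw [inter_comm t s] at ht
  omega

theorem card_inter_symmDiff_le_one {α : Type*} [DecidableEq α] {A B E : Finset α}
    (hA : #A = 2) (hB : #B = 2) (hAB : #(A ∪ B) = 3) (hE : #E ≤ 2)
    (hAE : #(A ∆ E) ≤ 2) (hAEB : #((A ∩ E) ∆ B) ≤ 2) : #((A ∩ B) ∆ E) ≤ 1 := by
  have hinter : (A ∩ E) ∩ B = (A ∩ B) ∩ E := by rw [inter_right_comm]
  have h₁ := card_symmDiff_add_two_mul_card_inter A E
  have h₂ := card_symmDiff_add_two_mul_card_inter (A ∩ E) B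
  have h₃ := card_symmDiff_add_two_mul_card_inter (A ∩ B) E
  have h₄ := card_union_add_card_inter A B
  have h₅ := card_le_card (inter_subset_left : (A ∩ B) ∩ E ⊆ A ∩ B)
  rw [hinter] at h₂
  omega

section flipSet

variable {n : ℕ}

theorem flipSet_empty (t : Fin n → Bool) : flipSet ∅ t = t := by
  funext i
  simp [flipSet]

theorem exists_flipSet_eq (t t' : Fin n → Bool) : ∃ E, t' = flipSet E t :=
  ⟨({i | t i ≠ t' i} : Finset (Fin n)), funext fun i => by
    cases h : t i <;> cases h' : t' i <;> simp [flipSet, h, h']⟩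

theorem hammingDist_flipSet_flipSet (X Y : Finset (Fin n)) (t : Fin n → Bool) :
    hammingDist (flipSet X t) (flipSet Y t) = #(X ∆ Y) := by
  unfold hammingDist
  congr 1
  ext i
  simp only [mem_filter, mem_univ, true_and, mem_symmDiff]
  by_cases hX : i ∈ X <;> by_cases hY : i ∈ Y <;> simp [flipSet, hX, hY]

theorem hammingDist_self_flipSet (X : Finset (Fin n)) (t : Fin n → Bool) :
    hammingDist t (flipSet X t) = #X := by
  have h := hammingDist_flipSet_flipSet ∅ X t
  rwa [flipSet_empty, ← bot_eq_empty, bot_symmDiff] at h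

theorem maj_self_flipSet_flipSet (X Y : Finset (Fin n)) (t : Fin n → Bool) :
    maj t (flipSet X t) (flipSet Y t) = flipSet (X ∩ Y) t := by
  funext i
  by_cases hX : i ∈ X <;> by_cases hY : i ∈ Y <;> cases t i <;> simp [maj, flipSet, hX, hY]

end flipSet

theorem majority_close_tuples_general {n : ℕ} (R : Set (Fin n → Bool))
    (hclosed : ∀ x ∈ R, ∀ y ∈ R, ∀ z ∈ R, maj x y z ∈ R)
    (hdist : ∀ x ∈ R, ∀ y ∈ R, hammingDist x y ≤ 2)
    (t₁ t₂ t₃ : Fin n → Bool) (ht₁ : t₁ ∈ R) (ht₂ : t₂ ∈ R) (ht₃ : t₃ ∈ R)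
    (A B : Finset (Fin n)) (hA : t₂ = flipSet A t₁) (hB : t₃ = flipSet B t₁)
    (hcA : A.card = 2) (hcB : B.card = 2) (hAB : (A ∪ B).card = 3) :
    ∀ t' ∈ R, hammingDist (maj t₁ t₂ t₃) t' ≤ 1 := by
  intro t' ht'
  obtain ⟨E, rfl⟩ := exists_flipSet_eq t₁ t'
  subst hA hB
  have hmaj := hclosed _ ht₁ _ ht₂ _ ht'
  rw [maj_self_flipSet_flipSet] at hmaj ⊢
  rw [hammingDist_flipSet_flipSet]
  refine card_inter_symmDiff_le_one hcA hcB hAB ?_ ?_ ?_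
  · simpa only [hammingDist_self_flipSet] using hdist _ ht₁ _ ht'
  · simpa only [hammingDist_flipSet_flipSet] using hdist _ ht₂ _ ht'
  · simpa only [hammingDist_flipSet_flipSet] using hdist _ hmaj _ ht₃

theorem majority_close_tuples {n : ℕ} (R : Set (Fin n → Bool))
    (hclosed : ∀ x ∈ R, ∀ y ∈ R, ∀ z ∈ R, maj x y z ∈ R)
    (hdist : ∀ x ∈ R, ∀ y ∈ R, hammingDist x y ≤ 2)
    (t₁ t₂ t₃ : Fin n → Bool) (ht₁ : t₁ ∈ R) (ht₂ : t₂ ∈ R) (ht₃ : t₃ ∈ R)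
    (h12 : t₁ ≠ t₂) (h13 : t₁ ≠ t₃) (h23 : t₂ ≠ t₃)
    (A B : Finset (Fin n)) (hA : t₂ = flipSet A t₁) (hB : t₃ = flipSet B t₁)
    (hcA : A.card = 2) (hcB : B.card = 2) (hAB : (A ∪ B).card = 3) :
    ∀ t' ∈ R, hammingDist (maj t₁ t₂ t₃) t' ≤ 1 :=
  majority_close_tuples_general R hclosed hdist t₁ t₂ t₃ ht₁ ht₂ ht₃ A B hA hB hcA hcB hAB
end

section
/- Every relation R ⊆ {0,1}^n with n < m that is invariant under the function h_m is also invariant under h_{m-1}, where h_k(x₁,...,x_{k+1}) = ⋁_{i=1}^{k+1} (x₁ ∧ ... ∧ x_{i-1} ∧ x_{i+1} ∧ ... ∧ x_{k+1}). -/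
/-- `hAB p xs = true` iff at least `p - 1` of the `p` inputs are `true`.
For `p = k+1` this is the function `h_k`. -/
def hAB (p : ℕ) (xs : Fin p → Bool) : Bool :=
  decide (p - 1 ≤ (Finset.univ.filter fun i => xs i = true).card)

/-- `R` is invariant under the `p`-ary function `hAB p` (i.e. `h_{p-1}`) applied coordinatewise. -/
def HInv {n : ℕ} (R : Set (Fin n → Bool)) (p : ℕ) : Prop :=
  ∀ ts : Fin p → Fin n → Bool, (∀ j, ts j ∈ R) →
    (fun i => hAB p (fun j => ts j i)) ∈ R

lemma hAB_key (m : ℕ) (hm : 2 ≤ m) (xs : Fin m → Bool) (j : Fin m)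
    (hj : xs j = false → (Finset.univ.filter fun k => xs k = true).card + 2 ≤ m) :
    hAB m xs = hAB (m + 1) ((Fin.snoc xs (xs j) : Fin (m+1) → Bool)) := by
  unfold hAB
  have hcard : (Finset.univ.filter fun k => (Fin.snoc xs (xs j) : Fin (m+1) → Bool) k = true).card
      = (Finset.univ.filter fun k => xs k = true).card + (if xs j = true then 1 else 0) := by
    rw [Finset.card_filter, Finset.card_filter, Fin.sum_univ_castSucc]
    simp
  rw [hcard]
  set c := (Finset.univ.filter fun k => xs k = true).card with hc
  cases h : xs j with
  | true => rw [if_pos rfl]; rw [decide_eq_decide]; omega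
  | false =>
    have := hj h
    rw [if_neg (by simp)]
    rw [decide_eq_decide]; omega

theorem hm_invariance_small_arity {n : ℕ} (m : ℕ) (hm : 2 ≤ m) (hn : n < m)
    (R : Set (Fin n → Bool)) (hinv : HInv R (m + 1)) : HInv R m := by
  intro ts hts
  classical
  have hm0 : 0 < m := by omega
  set f : Fin n → Fin m := fun i =>
    if h : ∃ k, ts k i = false then h.choose else ⟨0, hm0⟩ with hf
  obtain ⟨j, hj⟩ : ∃ j : Fin m, ∀ i, f i ≠ j := by
    by_contra h
    push_neg at h
    have hsurj : Function.Surjective f := fun j => h j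
    have := Fintype.card_le_of_surjective f hsurj
    simp only [Fintype.card_fin] at this
    omega
  have key : ∀ i, ts j i = false →
      (Finset.univ.filter fun k => ts k i = true).card + 2 ≤ m := by
    intro i hji
    have hex : ∃ k, ts k i = false := ⟨j, hji⟩
    have hfi : ts (f i) i = false := by
      simp only [hf, dif_pos hex]
      exact hex.choose_spec
    have hfne : f i ≠ j := hj i
    have hsub : {f i, j} ⊆ Finset.univ.filter fun k => ts k i = false := by
      intro k hk
      simp only [Finset.mem_insert, Finset.mem_singleton] at hk
      rcases hk with rfl | rfl <;> simp [hfi, hji]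
    have h2 : 2 ≤ (Finset.univ.filter fun k => ts k i = false).card := by
      have := Finset.card_le_card hsub
      rwa [Finset.card_insert_of_notMem (by simpa using hfne),
        Finset.card_singleton] at this
    have hsum : (Finset.univ.filter fun k => ts k i = true).card
        + (Finset.univ.filter fun k => ts k i = false).card = m := by
      have := Finset.card_filter_add_card_filter_not
        (s := (Finset.univ : Finset (Fin m))) (p := fun k => ts k i = true)
      simpa [Bool.not_eq_true] using this
    omega
  have h1 := hinv (Fin.snoc ts (ts j) : Fin (m+1) → Fin n → Bool) ?_
  · have heq : (fun i => hAB m (fun k => ts k i))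
        = fun i => hAB (m + 1) (fun k => (Fin.snoc ts (ts j) : Fin (m+1) → Fin n → Bool) k i) := by
      funext i
      have hsnoc : (fun k => (Fin.snoc ts (ts j) : Fin (m+1) → Fin n → Bool) k i)
          = (Fin.snoc (fun k => ts k i) (ts j i) : Fin (m+1) → Bool) := by
        funext k
        refine Fin.lastCases ?_ ?_ k
        · simp
        · intro k; simp
      rw [hsnoc]
      exact hAB_key m hm (fun k => ts k i) j (key i)
    rw [heq]
    exact h1
  · intro k
    refine Fin.lastCases ?_ ?_ k
    · simpa using hts j
    · intro k; simpa using hts k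
end

section
/- Let R ⊆ {0,1}^n be invariant under the coordinatewise majority function m, and let t, u ∈ R with u = t ⊕ {x, K} for distinct coordinates x, K, and suppose t ⊕ {x} ∉ R. Then there is no tuple v ∈ R whose restriction to {x, K} equals the restriction of t ⊕ {x} to {x, K}. -/
theorem no_bad_projection {n : ℕ} (R : Set (Fin n → Bool))
    (hmaj : ∀ x ∈ R, ∀ y ∈ R, ∀ z ∈ R, maj x y z ∈ R)
    (t : Fin n → Bool) (x K : Fin n) (hxK : x ≠ K)
    (ht : t ∈ R) (hu : flipSet {x, K} t ∈ R)
    (hnot : flipSet {x} t ∉ R) :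
    ¬ ∃ v ∈ R, v x = flipSet {x} t x ∧ v K = flipSet {x} t K := by
  rintro ⟨v, hv, hvx, hvK⟩
  apply hnot
  have key : maj v t (flipSet {x, K} t) = flipSet {x} t := by
    funext i
    by_cases hix : i = x
    · subst hix
      simp [maj, flipSet, hvx]
    · by_cases hiK : i = K
      · subst hiK
        simp [maj, flipSet, Ne.symm hxK] at *
        simp [hvK]
      · simp [maj, flipSet, hix, hiK]
        cases t i <;> simp
  rw [← key]
  exact hmaj v hv t ht _ hu
end

section
/- Any relation R ⊆ {0,1}^n that omits exactly one tuple (i.e., |R| = 2^n − 1) is a Δ-matroid relation. -/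
def IsStep {n : ℕ} (x x' y : Fin n → Bool) : Prop :=
  hammingDist x x' = 1 ∧ hammingDist x x' + hammingDist x' y = hammingDist x y

def IsDeltaMatroid {n : ℕ} (R : Set (Fin n → Bool)) : Prop :=
  ∀ x ∈ R, ∀ y ∈ R, ∀ x', IsStep x x' y →
    x' ∈ R ∨ ∃ x'' ∈ R, IsStep x' x'' y

lemma step_update {n : ℕ} (a b : Fin n → Bool) (i : Fin n) (hi : a i ≠ b i) :
    IsStep a (Function.update a i (b i)) b := by
  have h1 : ({j | a j ≠ Function.update a i (b i) j} : Finset (Fin n)) = {i} := by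
    ext j
    simp only [Finset.mem_filter, Finset.mem_univ, true_and, Finset.mem_singleton]
    constructor
    · intro hj
      by_contra hji
      rw [Function.update_of_ne hji] at hj
      exact hj rfl
    · rintro rfl
      rw [Function.update_self]
      exact hi
  have h2 : ({j | Function.update a i (b i) j ≠ b j} : Finset (Fin n)) =
      ({j | a j ≠ b j} : Finset (Fin n)).erase i := by
    ext j
    simp only [Finset.mem_filter, Finset.mem_univ, true_and, Finset.mem_erase]
    constructor
    · intro hj
      by_cases hji : j = i
      · subst hji
        rw [Function.update_self] at hj
        exact absurd rfl hj
      · rw [Function.update_of_ne hji] at hj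
        exact ⟨hji, hj⟩
    · rintro ⟨hji, hj⟩
      rw [Function.update_of_ne hji]
      exact hj
  have hmem : i ∈ ({j | a j ≠ b j} : Finset (Fin n)) := by
    simp [hi]
  have hd1 : hammingDist a (Function.update a i (b i)) = 1 := by
    rw [hammingDist, h1, Finset.card_singleton]
  refine ⟨hd1, ?_⟩
  rw [hd1, hammingDist, hammingDist, h2, Finset.card_erase_of_mem hmem]
  have : 1 ≤ ({j | a j ≠ b j} : Finset (Fin n)).card := Finset.card_pos.mpr ⟨i, hmem⟩
  omega

theorem omit_one_delta_matroid {n : ℕ} (R : Set (Fin n → Bool))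
    (h : R.ncard = 2 ^ n - 1) : IsDeltaMatroid R := by
  intro x hx y hy x' hstep
  by_cases hx' : x' ∈ R
  · left; exact hx'
  right
  have htot := Set.ncard_add_ncard_compl R
  have hcardU : Nat.card (Fin n → Bool) = 2 ^ n := by
    simp [Nat.card_eq_fintype_card]
  have hpow : 1 ≤ 2 ^ n := Nat.one_le_two_pow
  have hcompl1 : Rᶜ.ncard = 1 := by omega
  obtain ⟨z, hz⟩ := Set.ncard_eq_one.mp hcompl1
  have hx'z : x' = z := by
    have : x' ∈ Rᶜ := hx'
    rw [hz] at this; exact this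
  subst hx'z
  have hne : x' ≠ y := fun hxy => hx' (hxy ▸ hy)
  obtain ⟨i, hi⟩ := Function.ne_iff.mp hne
  refine ⟨Function.update x' i (y i), ?_, step_update x' y i hi⟩
  by_contra hmem
  have : Function.update x' i (y i) ∈ Rᶜ := hmem
  rw [hz, Set.mem_singleton_iff] at this
  have := congrFun this i
  rw [Function.update_self] at this
  exact hi this.symm
end
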